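/- arXiv:2406.16447 — 2 statements merged into one kernel-verified Lean document; each statement's English description precedes it below -/
import Mathlib

section
/- Let J be a finite nonempty index set, and for each j ∈ J let X̄_j be a real-valued random variable with Gaussian law N(μ_j, σ_j²/n_j) with n_j a positive natural number and not all w_j² σ_j²/n_j equal to zero; assume the X̄_j are mutually independent. Let w_j ∈ ℝ, c ∈ ℝ, set X̄_mixed = Σ_j w_j X̄_j + c, μ = Σ_j w_j μ_j + c and σ²_mixed = Σ_j (w_j²/n_j) σ_j². Then for every z ≥ 0, the probability that μ lies in the interval [X̄_mixed − z·σ_mixed, X̄_mixed + z·σ_mixed] equals the measure that the standard Gaussian N(0,1) assigns to [−z, z]. -/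
open MeasureTheory ProbabilityTheory Real
open scoped NNReal ENNReal

section MixedEstimatorAux

lemma pdf_product (m₁ m₂ : ℝ) {v₁ v₂ : ℝ≥0} (h1 : v₁ ≠ 0) (h2 : v₂ ≠ 0) (y x : ℝ) :
    gaussianPDFReal m₁ v₁ x * gaussianPDFReal m₂ v₂ (y - x)
      = ((√(2*π*v₁))⁻¹ * (√(2*π*v₂))⁻¹ * rexp (-(y - (m₁+m₂))^2 / (2*((v₁:ℝ)+v₂))))
        * rexp (-(((v₁:ℝ)+v₂)/(2*v₁*v₂)) * (x - (m₁*v₂ + (y-m₂)*v₁)/((v₁:ℝ)+v₂))^2) := by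
  have hv1 : (0:ℝ) < v₁ := lt_of_le_of_ne (v₁.coe_nonneg) (by exact_mod_cast Ne.symm h1)
  have hv2 : (0:ℝ) < v₂ := lt_of_le_of_ne (v₂.coe_nonneg) (by exact_mod_cast Ne.symm h2)
  have hs : (0:ℝ) < (v₁:ℝ) + v₂ := by linarith
  have hexp : rexp (-(x - m₁)^2 / (2*(v₁:ℝ))) * rexp (-(y - x - m₂)^2 / (2*(v₂:ℝ)))
      = rexp (-(y - (m₁+m₂))^2 / (2*((v₁:ℝ)+v₂)))
        * rexp (-(((v₁:ℝ)+v₂)/(2*v₁*v₂)) * (x - (m₁*v₂ + (y-m₂)*v₁)/((v₁:ℝ)+v₂))^2) := by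
    rw [← Real.exp_add, ← Real.exp_add]
    congr 1
    field_simp
    ring
  simp only [gaussianPDFReal]
  calc (√(2*π*v₁))⁻¹ * rexp (-(x - m₁)^2 / (2*(v₁:ℝ)))
        * ((√(2*π*v₂))⁻¹ * rexp (-(y - x - m₂)^2 / (2*(v₂:ℝ))))
      = (√(2*π*v₁))⁻¹ * (√(2*π*v₂))⁻¹
        * (rexp (-(x - m₁)^2 / (2*(v₁:ℝ))) * rexp (-(y - x - m₂)^2 / (2*(v₂:ℝ)))) := by ring
    _ = _ := by rw [hexp]; ring

lemma integral_pdf_conv (m₁ m₂ : ℝ) {v₁ v₂ : ℝ≥0} (h1 : v₁ ≠ 0) (h2 : v₂ ≠ 0) (y : ℝ) :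
    ∫ x, gaussianPDFReal m₁ v₁ x * gaussianPDFReal m₂ v₂ (y - x)
      = gaussianPDFReal (m₁ + m₂) (v₁ + v₂) y := by
  have hv1 : (0:ℝ) < v₁ := lt_of_le_of_ne (v₁.coe_nonneg) (by exact_mod_cast Ne.symm h1)
  have hv2 : (0:ℝ) < v₂ := lt_of_le_of_ne (v₂.coe_nonneg) (by exact_mod_cast Ne.symm h2)
  have hs : (0:ℝ) < (v₁:ℝ) + v₂ := by linarith
  have ha : (0:ℝ) < ((v₁:ℝ)+v₂)/(2*v₁*v₂) := by positivity
  have hπ := pi_pos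
  simp only [pdf_product m₁ m₂ h1 h2 y]
  rw [integral_const_mul,
    MeasureTheory.integral_sub_right_eq_self
      (fun x => rexp (-(((v₁:ℝ)+v₂)/(2*v₁*v₂)) * x ^ 2)) ((m₁*v₂ + (y-m₂)*v₁)/((v₁:ℝ)+v₂)),
    integral_gaussian]
  simp only [gaussianPDFReal, NNReal.coe_add]
  rw [mul_comm, ← mul_assoc]
  congr 1
  rw [mul_comm]
  rw [← Real.sqrt_inv, ← Real.sqrt_inv, ← Real.sqrt_mul (by positivity),
    ← Real.sqrt_mul (by positivity), ← Real.sqrt_inv]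
  congr 1
  field_simp

lemma integrable_pdf_conv (m₁ m₂ : ℝ) {v₁ v₂ : ℝ≥0} (h1 : v₁ ≠ 0) (h2 : v₂ ≠ 0) (y : ℝ) :
    Integrable (fun x => gaussianPDFReal m₁ v₁ x * gaussianPDFReal m₂ v₂ (y - x)) := by
  have hv1 : (0:ℝ) < v₁ := lt_of_le_of_ne (v₁.coe_nonneg) (by exact_mod_cast Ne.symm h1)
  have hv2 : (0:ℝ) < v₂ := lt_of_le_of_ne (v₂.coe_nonneg) (by exact_mod_cast Ne.symm h2)
  have hs : (0:ℝ) < (v₁:ℝ) + v₂ := by linarith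
  have ha : (0:ℝ) < ((v₁:ℝ)+v₂)/(2*v₁*v₂) := by positivity
  simp only [pdf_product m₁ m₂ h1 h2 y]
  refine Integrable.const_mul ?_ _
  simpa using (integrable_exp_neg_mul_sq ha).comp_sub_right
    ((m₁*v₂ + (y-m₂)*v₁)/((v₁:ℝ)+v₂))



lemma gaussianPDFReal_shift (m₂ : ℝ) (v₂ : ℝ≥0) (x y : ℝ) :
    gaussianPDFReal (m₂ + x) v₂ y = gaussianPDFReal m₂ v₂ (y - x) := by
  simp only [gaussianPDFReal]
  ring_nf

lemma lintegral_pdf_conv (m₁ m₂ : ℝ) {v₁ v₂ : ℝ≥0} (h1 : v₁ ≠ 0) (h2 : v₂ ≠ 0) (y : ℝ) :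
    ∫⁻ x, gaussianPDF m₁ v₁ x * gaussianPDF (m₂ + x) v₂ y
      = gaussianPDF (m₁ + m₂) (v₁ + v₂) y := by
  have hpt : ∀ x, gaussianPDF m₁ v₁ x * gaussianPDF (m₂ + x) v₂ y
      = ENNReal.ofReal (gaussianPDFReal m₁ v₁ x * gaussianPDFReal m₂ v₂ (y - x)) := by
    intro x
    simp only [gaussianPDF, gaussianPDFReal_shift m₂ v₂ x y,
      ← ENNReal.ofReal_mul (gaussianPDFReal_nonneg m₁ v₁ x)]
  simp only [hpt]
  rw [← ofReal_integral_eq_lintegral_ofReal (integrable_pdf_conv m₁ m₂ h1 h2 y)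
      (Filter.Eventually.of_forall fun x =>
        mul_nonneg (gaussianPDFReal_nonneg _ _ _) (gaussianPDFReal_nonneg _ _ _)),
    integral_pdf_conv m₁ m₂ h1 h2 y]
  rfl



lemma MixedAuxGaussConv (m₁ m₂ : ℝ) (v₁ v₂ : ℝ≥0) :
    (gaussianReal m₁ v₁).conv (gaussianReal m₂ v₂) = gaussianReal (m₁+m₂) (v₁+v₂) := by
  by_cases h1 : v₁ = 0
  · subst h1
    rw [gaussianReal_zero_var, Measure.conv, Measure.dirac_prod,
      Measure.map_map measurable_add measurable_prodMk_left]
    have h : ((fun p : ℝ × ℝ => p.1 + p.2) ∘ Prod.mk m₁) = (fun y => m₁ + y) := rfl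
    rw [h, gaussianReal_map_const_add, add_comm m₂ m₁, zero_add]
  by_cases h2 : v₂ = 0
  · subst h2
    rw [gaussianReal_zero_var, Measure.conv, Measure.prod_dirac,
      Measure.map_map measurable_add measurable_prodMk_right]
    have h : ((fun p : ℝ × ℝ => p.1 + p.2) ∘ fun x => (x, m₂)) = (fun x => x + m₂) := rfl
    rw [h, gaussianReal_map_add_const, add_zero]
  -- main case
  have h12 : v₁ + v₂ ≠ 0 := by simp [h1, h2]
  have hm2 : Measurable (fun p : ℝ × ℝ => gaussianPDF (m₂ + p.1) v₂ p.2) := by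
    apply Measurable.ennreal_ofReal
    unfold gaussianPDFReal
    fun_prop
  have hmprod : Measurable (fun p : ℝ × ℝ => gaussianPDF m₁ v₁ p.1 * gaussianPDF (m₂ + p.1) v₂ p.2) :=
    ((measurable_gaussianPDF m₁ v₁).comp measurable_fst).mul hm2
  refine Measure.ext fun s hs => ?_
  rw [Measure.conv, Measure.map_apply measurable_add hs,
    Measure.prod_apply (measurable_add hs)]
  have hxs : ∀ x : ℝ, (gaussianReal m₂ v₂) (Prod.mk x ⁻¹' ((fun p : ℝ × ℝ => p.1 + p.2) ⁻¹' s))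
      = ∫⁻ y in s, gaussianPDF (m₂ + x) v₂ y := by
    intro x
    have hpre : (Prod.mk x ⁻¹' ((fun p : ℝ × ℝ => p.1 + p.2) ⁻¹' s)) = (fun y => x + y) ⁻¹' s := rfl
    rw [hpre, ← Measure.map_apply (measurable_const_add x) hs, gaussianReal_map_const_add,
      gaussianReal_apply _ h2]
  simp only [hxs]
  rw [gaussianReal_of_var_ne_zero _ h1,
    lintegral_withDensity_eq_lintegral_mul_non_measurable _ (measurable_gaussianPDF m₁ v₁)
      (Filter.Eventually.of_forall fun x => ENNReal.ofReal_lt_top)]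
  simp only [Pi.mul_apply]
  calc ∫⁻ x, gaussianPDF m₁ v₁ x * ∫⁻ y in s, gaussianPDF (m₂ + x) v₂ y
      = ∫⁻ x, ∫⁻ y in s, gaussianPDF m₁ v₁ x * gaussianPDF (m₂ + x) v₂ y := by
        refine lintegral_congr fun x => ?_
        exact (lintegral_const_mul' _ _ (by simp only [gaussianPDF]; exact ENNReal.ofReal_ne_top)).symm
    _ = ∫⁻ y in s, ∫⁻ x, gaussianPDF m₁ v₁ x * gaussianPDF (m₂ + x) v₂ y := by
        exact lintegral_lintegral_swap hmprod.aemeasurable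
    _ = ∫⁻ y in s, gaussianPDF (m₁ + m₂) (v₁ + v₂) y := by
        refine lintegral_congr fun y => lintegral_pdf_conv m₁ m₂ h1 h2 y
    _ = gaussianReal (m₁ + m₂) (v₁ + v₂) s := (gaussianReal_apply _ h12 s).symm



lemma map_add_indep {Ω : Type*} [MeasureSpace Ω] [IsProbabilityMeasure (ℙ : Measure Ω)]
    {f g : Ω → ℝ} (hf : Measurable f) (hg : Measurable g)
    (hind : IndepFun f g ℙ) {m₁ m₂ : ℝ} {v₁ v₂ : ℝ≥0}
    (h1 : Measure.map f ℙ = gaussianReal m₁ v₁) (h2 : Measure.map g ℙ = gaussianReal m₂ v₂) :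
    Measure.map (fun ω => f ω + g ω) ℙ = gaussianReal (m₁ + m₂) (v₁ + v₂) := by
  have hpair : Measure.map (fun ω => (f ω, g ω)) ℙ = (Measure.map f ℙ).prod (Measure.map g ℙ) :=
    (indepFun_iff_map_prod_eq_prod_map_map hf.aemeasurable hg.aemeasurable).mp hind
  have : Measure.map (fun ω => f ω + g ω) ℙ
      = Measure.map (fun p : ℝ × ℝ => p.1 + p.2) (Measure.map (fun ω => (f ω, g ω)) ℙ) := by
    rw [Measure.map_map measurable_add (hf.prodMk hg)]
    rfl
  rw [this, hpair, h1, h2, ← Measure.conv, MixedAuxGaussConv]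

lemma map_sum_indep {Ω : Type*} [MeasureSpace Ω] [IsProbabilityMeasure (ℙ : Measure Ω)]
    {J : Type*} {X : J → Ω → ℝ} (hX : ∀ j, Measurable (X j))
    {m : J → ℝ} {v : J → ℝ≥0}
    (hlaw : ∀ j, Measure.map (X j) ℙ = gaussianReal (m j) (v j))
    (hindep : iIndepFun X ℙ) (s : Finset J) :
    Measure.map (fun ω => ∑ j ∈ s, X j ω) ℙ
      = gaussianReal (∑ j ∈ s, m j) (∑ j ∈ s, v j) := by
  classical
  induction s using Finset.induction with
  | empty =>
      simp only [Finset.sum_empty]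
      rw [Measure.map_const, gaussianReal_zero_var]
      simp
  | @insert i s hi ih =>
      have hsum : Measurable (fun ω => ∑ j ∈ s, X j ω) := by
        exact Finset.measurable_sum s fun j _ => hX j
      have hind : IndepFun (fun ω => ∑ j ∈ s, X j ω) (X i) ℙ := by
        have h0 := hindep.indepFun_finsetSum_of_notMem hX hi
        have hfun : (∑ j ∈ s, X j) = fun ω => ∑ j ∈ s, X j ω := by
          funext ω; simp [Finset.sum_apply]
        rwa [hfun] at h0
      have h := map_add_indep hsum (hX i) hind ih (hlaw i)
      have hfun2 : (fun ω => ∑ j ∈ insert i s, X j ω)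
          = fun ω => (∑ j ∈ s, X j ω) + X i ω := by
        funext ω; rw [Finset.sum_insert hi]; ring
      rw [Finset.sum_insert hi, Finset.sum_insert hi, hfun2, h, add_comm (m i), add_comm (v i)]




end MixedEstimatorAux

/-- **Confidence interval for the mixed SSC/simulation estimator (exactly
Gaussian regime).**  If the sample means `X̄ j ~ N(μ j, σ2 j / n j)` are
mutually independent, not all `w j ^ 2 * σ2 j / n j` vanish, and
`X̄_mixed = ∑ j, w j * X̄ j + c`, `μ = ∑ j, w j * μ j + c`,
`σ²_mixed = ∑ j, (w j ^ 2 / n j) * σ2 j`, then for every `z ≥ 0` the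
probability that `μ ∈ [X̄_mixed - z·σ_mixed, X̄_mixed + z·σ_mixed]` equals the
mass that `N(0,1)` assigns to `[-z, z]`. -/
theorem mixed_estimator_confidence_interval
    {Ω : Type*} [MeasureSpace Ω] [IsProbabilityMeasure (ℙ : Measure Ω)]
    {J : Type*} [Fintype J] [Nonempty J]
    (Xbar : J → Ω → ℝ) (hX : ∀ j, Measurable (Xbar j))
    (μ : J → ℝ) (σ2 : J → ℝ≥0) (n : J → ℕ) (hn : ∀ j, 0 < n j)
    (hlaw : ∀ j, Measure.map (Xbar j) ℙ = gaussianReal (μ j) (σ2 j / (n j : ℝ≥0)))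
    (hindep : iIndepFun Xbar ℙ)
    (w : J → ℝ) (c : ℝ)
    (hpos : ¬ ∀ j, w j ^ 2 * (σ2 j : ℝ) / (n j : ℝ) = 0)
    (z : ℝ) (hz : 0 ≤ z) :
    ℙ {ω | (∑ j, w j * Xbar j ω + c)
              - z * Real.sqrt (∑ j, (w j ^ 2 / (n j : ℝ)) * (σ2 j : ℝ))
            ≤ ∑ j, w j * μ j + c
          ∧ ∑ j, w j * μ j + c
            ≤ (∑ j, w j * Xbar j ω + c)
              + z * Real.sqrt (∑ j, (w j ^ 2 / (n j : ℝ)) * (σ2 j : ℝ))}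
      = gaussianReal 0 1 (Set.Icc (-z) z) := by
  classical
  set M : ℝ := ∑ j, w j * μ j with hM
  set Vr : ℝ := ∑ j, (w j ^ 2 / (n j : ℝ)) * (σ2 j : ℝ) with hVrdef
  set σ : ℝ := Real.sqrt Vr with hσdef
  -- the scaled variables
  set Y : J → Ω → ℝ := fun j ω => w j * Xbar j ω with hY
  have hYmeas : ∀ j, Measurable (Y j) := fun j => (hX j).const_mul (w j)
  set vY : J → ℝ≥0 := fun j => (.mk (w j ^ 2) (sq_nonneg _) : ℝ≥0) * (σ2 j / (n j : ℝ≥0)) with hvY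
  have hYlaw : ∀ j, Measure.map (Y j) ℙ = gaussianReal (w j * μ j) (vY j) := by
    intro j
    have : Measure.map (Y j) ℙ = (Measure.map (Xbar j) ℙ).map (fun x => w j * x) := by
      rw [Measure.map_map (measurable_const_mul (w j)) (hX j)]
      rfl
    rw [this, hlaw j, gaussianReal_map_const_mul]
  have hYindep : iIndepFun Y ℙ := by
    have := hindep.comp (fun j => fun x : ℝ => w j * x)
      (fun j => measurable_const_mul (w j))
    exact this
  have hS := map_sum_indep hYmeas hYlaw hYindep Finset.univ
  -- identify variance
  have hVr : ((∑ j, vY j : ℝ≥0) : ℝ) = Vr := by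
    rw [NNReal.coe_sum, hVrdef]
    refine Finset.sum_congr rfl fun j _ => ?_
    push_cast
    have hnj : ((n j : ℝ≥0) : ℝ) = (n j : ℝ) := by push_cast; rfl
    rw [NNReal.coe_mul, NNReal.coe_div, hnj]
    simp only [NNReal.coe_mk]
    ring
  have hVrpos : 0 < Vr := by
    push_neg at hpos
    obtain ⟨j, hj⟩ := hpos
    have hterm : ∀ i : J, 0 ≤ (w i ^ 2 / (n i : ℝ)) * (σ2 i : ℝ) := by
      intro i; positivity
    refine Finset.sum_pos' (fun i _ => hterm i) ⟨j, Finset.mem_univ j, ?_⟩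
    have heq : (w j ^ 2 / (n j : ℝ)) * (σ2 j : ℝ) = w j ^ 2 * (σ2 j : ℝ) / (n j : ℝ) := by ring
    rw [heq]
    exact lt_of_le_of_ne (by positivity) (Ne.symm hj)
  have hσpos : 0 < σ := Real.sqrt_pos.mpr hVrpos
  set V : ℝ≥0 := ∑ j, vY j with hV
  have hVcoe : (V : ℝ) = Vr := hVr
  -- rewrite the event as a preimage
  have hTmeas : Measurable (fun ω => ∑ j, w j * Xbar j ω) :=
    Finset.measurable_sum _ fun j _ => (hX j).const_mul (w j)
  have hEvent : {ω | (∑ j, w j * Xbar j ω + c) - z * σ ≤ M + c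
          ∧ M + c ≤ (∑ j, w j * Xbar j ω + c) + z * σ}
      = (fun ω => ∑ j, w j * Xbar j ω) ⁻¹' Set.Icc (M - z*σ) (M + z*σ) := by
    ext ω
    simp only [Set.mem_setOf_eq, Set.mem_preimage, Set.mem_Icc]
    constructor <;> rintro ⟨h1, h2⟩ <;> constructor <;> linarith
  simp only [hY] at hS
  rw [hEvent, ← Measure.map_apply hTmeas measurableSet_Icc, hS]
  have haff : (gaussianReal 0 1).map (fun x => σ * x + M) = gaussianReal M V := by
    have h1 : (gaussianReal 0 1).map (fun x => σ * x) = gaussianReal 0 ((.mk (σ^2) (sq_nonneg σ) : ℝ≥0) * 1) := by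
      simpa using gaussianReal_map_const_mul (μ := 0) (v := 1) σ
    have hcomp : (fun x : ℝ => σ * x + M) = (fun x => x + M) ∘ (fun x => σ * x) := rfl
    rw [hcomp, ← Measure.map_map (measurable_add_const M) (measurable_const_mul σ), h1,
      gaussianReal_map_add_const M, zero_add]
    congr 1
    ext
    rw [NNReal.coe_mul, NNReal.coe_one, NNReal.coe_mk, mul_one, hσdef,
      Real.sq_sqrt hVrpos.le, ← hVcoe]
  rw [← haff, Measure.map_apply (by fun_prop) measurableSet_Icc]
  congr 1
  ext x
  simp only [Set.mem_preimage, Set.mem_Icc]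
  constructor <;> rintro ⟨h1, h2⟩ <;> constructor <;> nlinarith [hσpos]
end

section
/- Let ι be a finite index set with at least two elements, let (X_i)_{i∈ι} be mutually independent real random variables where X_i is exponentially distributed with rate λ_i > 0, and fix γ ∈ ι. Then the probability that X_γ is the minimum, i.e. P(X_γ ≤ X_i for all i ∈ ι), equals λ_γ / (Σ_{i∈ι} λ_i). -/
open MeasureTheory ProbabilityTheory
open scoped NNReal ENNReal

lemma expMeasure_Ici {r : ℝ} (hr : 0 < r) (x : ℝ) :
    expMeasure r (Set.Ici x) = ENNReal.ofReal (Real.exp (-(r * max x 0))) := by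
  haveI := isProbabilityMeasure_expMeasure hr
  have hWD : expMeasure r = volume.withDensity (exponentialPDF r) := rfl
  have hsing : expMeasure r {x} = 0 := by
    rw [hWD, withDensity_apply _ (measurableSet_singleton x), Measure.restrict_singleton]
    simp
  have hIic : expMeasure r (Set.Iic x)
      = ENNReal.ofReal (if 0 ≤ x then 1 - Real.exp (-(r * x)) else 0) := by
    rw [hWD, withDensity_apply _ measurableSet_Iic, lintegral_exponentialPDF_eq_antiDeriv hr]
  have hIio : expMeasure r (Set.Iio x)
      = ENNReal.ofReal (if 0 ≤ x then 1 - Real.exp (-(r * x)) else 0) := by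
    have hu : Set.Iio x ∪ {x} = Set.Iic x := Set.Iio_union_right
    have hdis : Disjoint (Set.Iio x) ({x} : Set ℝ) := by simp
    have := measure_union (μ := expMeasure r) hdis (measurableSet_singleton x)
    rw [hu, hsing, add_zero] at this
    rw [← this, hIic]
  rw [← Set.compl_Iio, measure_compl measurableSet_Iio (measure_ne_top _ _), measure_univ, hIio]
  rcases le_or_gt 0 x with hx | hx
  · rw [if_pos hx, max_eq_left hx]
    have he : Real.exp (-(r * x)) ≤ 1 :=
      Real.exp_le_one_iff.mpr (neg_nonpos.mpr (mul_nonneg hr.le hx))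
    rw [← ENNReal.ofReal_one, ← ENNReal.ofReal_sub _ (by linarith)]
    norm_num
  · rw [if_neg (not_le.mpr hx), max_eq_right hx.le]
    simp

lemma measurable_finset_inf' {ι Ω : Type*} [MeasurableSpace Ω] (s : Finset ι)
    (hs : s.Nonempty) (f : ι → Ω → ℝ) (hf : ∀ i, Measurable (f i)) :
    Measurable (fun ω => s.inf' hs fun i => f i ω) := by
  induction hs using Finset.Nonempty.cons_induction with
  | singleton i => simpa using hf i
  | cons i t hit ht ih =>
      have : (fun ω => (Finset.cons i t hit).inf' (Finset.cons_nonempty hit) fun j => f j ω)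
          = fun ω => min (f i ω) (t.inf' ht fun j => f j ω) := by
        funext ω; rw [Finset.inf'_cons (H := ht)]
      rw [this]
      exact (hf i).min ih

lemma my_inf'_attach {β : Type*} (s : Finset β) (hs : s.Nonempty) (hs' : s.attach.Nonempty)
    (f : β → ℝ) : (s.attach.inf' hs' fun i => f i) = s.inf' hs f := by
  apply WithTop.coe_injective
  rw [Finset.coe_inf', Finset.coe_inf']
  exact Finset.inf_attach s fun b => (↑(f b) : WithTop ℝ)


/-- **Probability that a given exponential wins the race.**
If `X i ~ Exp(lam i)` with `lam i > 0` are mutually independent over a finite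
index set with at least two elements, then for a fixed `γ`,
`P(∀ i, X γ ≤ X i) = lam γ / ∑ i, lam i`. -/
theorem exponential_race_winner
    {Ω : Type*} [MeasureSpace Ω] [IsProbabilityMeasure (ℙ : Measure Ω)]
    {ι : Type*} [Fintype ι] (hcard : 2 ≤ Fintype.card ι)
    (X : ι → Ω → ℝ) (hX : ∀ i, Measurable (X i))
    (lam : ι → ℝ) (hlam : ∀ i, 0 < lam i)
    (hlaw : ∀ i, Measure.map (X i) ℙ = expMeasure (lam i))
    (hindep : iIndepFun X ℙ)
    (γ : ι) :
    ℙ {ω | ∀ i, X γ ω ≤ X i ω} = ENNReal.ofReal (lam γ / ∑ i, lam i) := by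
  classical
  set s : Finset ι := Finset.univ.erase γ with hs_def
  have hγs : γ ∉ s := Finset.notMem_erase γ _
  have hs : s.Nonempty := by
    rw [← Finset.card_pos, hs_def, Finset.card_erase_of_mem (Finset.mem_univ γ),
      Finset.card_univ]
    omega
  set a := lam γ with ha_def
  set b := ∑ i ∈ s, lam i with hb_def
  have ha : 0 < a := hlam γ
  have hb : 0 < b := Finset.sum_pos (fun i _ => hlam i) hs
  have hsum : ∑ i, lam i = a + b :=
    (Finset.add_sum_erase Finset.univ lam (Finset.mem_univ γ)).symm
  set Y : Ω → ℝ := fun ω => s.inf' hs fun i => X i ω with hY_def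
  have hYmeas : Measurable Y := measurable_finset_inf' s hs X hX
  haveI : IsProbabilityMeasure (Measure.map Y ℙ) :=
    Measure.isProbabilityMeasure_map hYmeas.aemeasurable
  haveI : IsProbabilityMeasure (expMeasure a) := isProbabilityMeasure_expMeasure ha
  -- set rewriting
  have hset : {ω | ∀ i, X γ ω ≤ X i ω}
      = (fun ω => (X γ ω, Y ω)) ⁻¹' {p : ℝ × ℝ | p.1 ≤ p.2} := by
    ext ω
    simp only [Set.mem_setOf_eq, Set.mem_preimage, hY_def, Finset.le_inf'_iff]
    constructor
    · intro h i _; exact h i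
    · intro h i
      rcases eq_or_ne i γ with rfl | hne
      · exact le_refl _
      · exact h i (Finset.mem_erase.mpr ⟨hne, Finset.mem_univ i⟩)
  -- independence of X γ and Y
  have hXY : IndepFun (X γ) Y ℙ := by
    have h := hindep.indepFun_finset {γ} s (Finset.disjoint_singleton_left.mpr hγs) hX
    have hattach : (s.attach).Nonempty := Finset.attach_nonempty_iff.mpr hs
    have hφ : Measurable fun v : (∀ _ : ({γ} : Finset ι), ℝ) =>
        v ⟨γ, Finset.mem_singleton_self γ⟩ := measurable_pi_apply _
    have hψ : Measurable fun v : (∀ _ : {x // x ∈ s}, ℝ) =>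
        s.attach.inf' hattach fun i => v i :=
      measurable_finset_inf' s.attach hattach (fun i (v : ∀ _ : {x // x ∈ s}, ℝ) => v i)
        (fun i => measurable_pi_apply i)
    have hcomp := h.comp hφ hψ
    have hYeq : ((fun v : (∀ _ : {x // x ∈ s}, ℝ) => s.attach.inf' hattach fun i => v i)
        ∘ (fun ω (i : {x // x ∈ s}) => X i ω)) = Y := by
      funext ω
      exact my_inf'_attach s hs hattach (fun i => X i ω)
    rw [hYeq] at hcomp
    exact hcomp
  have hpairmeas : Measurable fun ω => (X γ ω, Y ω) := (hX γ).prodMk hYmeas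
  have hsetm : MeasurableSet {p : ℝ × ℝ | p.1 ≤ p.2} :=
    measurableSet_le measurable_fst measurable_snd
  have hmap : Measure.map (fun ω => (X γ ω, Y ω)) ℙ
      = (Measure.map (X γ) ℙ).prod (Measure.map Y ℙ) :=
    (indepFun_iff_map_prod_eq_prod_map_map (hX γ).aemeasurable hYmeas.aemeasurable).mp hXY
  rw [hset, ← Measure.map_apply hpairmeas hsetm, hmap, hlaw γ, Measure.prod_apply hsetm]
  -- compute slices
  have hslice : ∀ x : ℝ, (Measure.map Y ℙ) (Prod.mk x ⁻¹' {p : ℝ × ℝ | p.1 ≤ p.2})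
      = ENNReal.ofReal (Real.exp (-(b * max x 0))) := by
    intro x
    have h1 : Prod.mk x ⁻¹' {p : ℝ × ℝ | p.1 ≤ p.2} = Set.Ici x := by
      ext y; simp
    have h2 : Y ⁻¹' (Set.Ici x) = ⋂ i ∈ s, X i ⁻¹' Set.Ici x := by
      ext ω
      simp [hY_def, Finset.le_inf'_iff]
    rw [h1, Measure.map_apply hYmeas measurableSet_Ici, h2,
      hindep.meas_biInter (fun i _ => ⟨Set.Ici x, measurableSet_Ici, rfl⟩)]
    have h3 : ∀ i ∈ s, ℙ (X i ⁻¹' Set.Ici x)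
        = ENNReal.ofReal (Real.exp (-(lam i * max x 0))) := by
      intro i _
      rw [← Measure.map_apply (hX i) measurableSet_Ici, hlaw i, expMeasure_Ici (hlam i)]
    rw [Finset.prod_congr rfl h3,
      ← ENNReal.ofReal_prod_of_nonneg (fun i _ => (Real.exp_pos _).le), ← Real.exp_sum]
    congr 2
    rw [Finset.sum_neg_distrib, ← Finset.sum_mul]
  rw [lintegral_congr hslice]
  -- final computation
  have hgm : Measurable fun x : ℝ => ENNReal.ofReal (Real.exp (-(b * max x 0))) := by
    fun_prop
  have hpm : ∀ r : ℝ, Measurable (exponentialPDF r) := fun r =>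
    ENNReal.measurable_ofReal.comp (measurable_exponentialPDFReal r)
  have hWD : expMeasure a = volume.withDensity (exponentialPDF a) := rfl
  rw [hWD, lintegral_withDensity_eq_lintegral_mul _ (hpm a) hgm]
  have key : (fun x => (exponentialPDF a * fun x => ENNReal.ofReal (Real.exp (-(b * max x 0)))) x)
      = fun x => ENNReal.ofReal (a / (a + b)) * exponentialPDF (a + b) x := by
    funext x
    simp only [Pi.mul_apply]
    rcases le_or_gt 0 x with hx | hx
    · rw [max_eq_left hx, exponentialPDF_of_nonneg hx, exponentialPDF_of_nonneg hx,
        ← ENNReal.ofReal_mul (by positivity), ← ENNReal.ofReal_mul (by positivity)]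
      congr 1
      rw [div_mul_eq_mul_div, mul_comm (a + b), mul_div_assoc, mul_div_assoc,
        div_self (by positivity), mul_one, mul_assoc, ← Real.exp_add]
      ring_nf
    · rw [exponentialPDF_of_neg hx, exponentialPDF_of_neg hx, zero_mul, mul_zero]
  rw [key, lintegral_const_mul _ (hpm (a + b)),
    lintegral_exponentialPDF_eq_one (by positivity), mul_one, hsum]
end
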